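/- arXiv:2307.15350 — 3 statements merged into one kernel-verified Lean document; each statement's English description precedes it below -/
import Mathlib

section
/- Let d, m ∈ ℕ and let p_0, …, p_m : ℝ^d → ℝ be polynomial functions. For θ ∈ ℝ^d define the univariate polynomial P_θ(λ) = Σ_{u=0}^m p_u(θ) λ^u. Suppose there exists θ₀ ∈ ℝ^d such that p_m(θ₀) ≠ 0 and every complex root of P_{θ₀} is simple. Then the set {θ ∈ ℝ^d : p_m(θ) ≠ 0 and P_θ has a repeated complex root} has Lebesgue measure zero in ℝ^d. -/
/-!
Let `F = Σ_{u ≤ m} p_u X^u`, a polynomial in `X` over `ℝ[θ]`. Its resultant with `F'`, taken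
with the fixed sizes `m, m - 1`, is a polynomial `D(θ)` that specializes at each `θ` to the
resultant of `F_θ` and `F_θ'`. When `p_m(θ) ≠ 0` those sizes are the true degrees, so `D(θ) ≠ 0`
iff `F_θ` has no repeated complex root. Hence `D(θ₀) ≠ 0`, `D` is a nonzero polynomial, and the
zero set of a nonzero real polynomial is Lebesgue-null: by Fubini, for almost every value of the
last `n` variables the leading coefficient in the first variable does not vanish, leaving only
finitely many roots in that variable.
-/

open Finset MeasureTheory MvPolynomial

namespace Polynomial

theorem separable_iff_resultant_derivative_ne_zero {K : Type*} [Field K]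
    {f : K[X]} (hf : f ≠ 0) : f.Separable ↔ resultant f (derivative f) ≠ 0 := by
  rw [Separable, Ne, resultant_eq_zero_iff]
  simp [hf]

theorem separable_iff_forall_isRoot_derivative {K : Type*} [Field K] [IsAlgClosed K] {f : K[X]} :
    f.Separable ↔ ∀ z, f.IsRoot z → ¬ (derivative f).IsRoot z := by
  rw [Separable, isCoprime_iff_aeval_ne_zero_of_isAlgClosed (k := K) K]
  simp [or_iff_not_imp_left]

theorem ae_eval_ne_zero {f : ℝ[X]} (hf : f ≠ 0) : ∀ᵐ a : ℝ, f.eval a ≠ 0 := by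
  rw [ae_iff]
  simpa using (finite_setOfPred_isRoot hf).measure_zero volume

end Polynomial

theorem MvPolynomial.ae_eval_ne_zero :
    ∀ {n : ℕ} {q : MvPolynomial (Fin n) ℝ}, q ≠ 0 → ∀ᵐ x : Fin n → ℝ, eval x q ≠ 0
  | 0, q, hq => .of_forall fun x => by
      rw [q.eq_C_of_isEmpty] at hq ⊢
      simpa [C_eq_zero] using hq
  | n + 1, q, hq => by
    set Q := finSuccEquiv ℝ n q
    have hQ : Q ≠ 0 := by simpa [Q] using hq
    let e := MeasurableEquiv.piFinSuccAbove (fun _ : Fin (n + 1) => ℝ) 0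
    have he : ∀ z, e.symm z = Fin.cons z.1 z.2 := fun z => Fin.insertNth_zero' z.1 z.2
    have hmeas : MeasurableSet {z : ℝ × (Fin n → ℝ) | eval (e.symm z) q ≠ 0} :=
      (measurableSet_eq_fun ((continuous_eval q).measurable.comp e.symm.measurable)
        measurable_const).compl
    have hprod : ∀ᵐ z : ℝ × (Fin n → ℝ), eval (e.symm z) q ≠ 0 := by
      rw [Measure.volume_eq_prod, Measure.ae_prod_iff_ae_ae hmeas, Measure.ae_ae_comm hmeas]
      filter_upwards [ae_eval_ne_zero (Polynomial.leadingCoeff_ne_zero.2 hQ)] with y hy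
      have hQy : Q.map (eval y) ≠ 0 := fun h0 => hy (by
        simpa [Polynomial.coeff_map] using congrArg (Polynomial.coeff · Q.natDegree) h0)
      simpa [he, eval_eq_eval_mv_eval'] using Polynomial.ae_eval_ne_zero hQy
    filter_upwards [(volume_preserving_piFinSuccAbove (fun _ : Fin (n + 1) => ℝ) 0)
      |>.quasiMeasurePreserving.ae hprod] with x hx
    rwa [e.symm_apply_apply] at hx

section

open Polynomial

noncomputable def MvPolynomial.complexEval {σ : Type*} (θ : σ → ℝ) : MvPolynomial σ ℝ →+* ℂ :=
  (algebraMap ℝ ℂ).comp (eval θ)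

theorem MvPolynomial.ae_separable_map_complexEval {d m : ℕ} {F : (MvPolynomial (Fin d) ℝ)[X]}
    (hF : F.natDegree ≤ m) {θ₀ : Fin d → ℝ} (h₀ : (F.map (complexEval θ₀)).coeff m ≠ 0)
    (hsep : (F.map (complexEval θ₀)).Separable) :
    ∀ᵐ θ : Fin d → ℝ, (F.map (complexEval θ)).coeff m ≠ 0 → (F.map (complexEval θ)).Separable := by
  have hsep_iff : ∀ θ : Fin d → ℝ, (F.map (complexEval θ)).coeff m ≠ 0 →
      ((F.map (complexEval θ)).Separable ↔ eval θ (resultant F (derivative F) m (m - 1)) ≠ 0) := by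
    intro θ hθ
    have hdeg := natDegree_eq_of_le_of_coeff_ne_zero (natDegree_map_le.trans hF) hθ
    rw [separable_iff_resultant_derivative_ne_zero (fun h => hθ (by simp [h])),
      natDegree_derivative, hdeg, derivative_map, resultant_map_map]
    simp [complexEval]
  have hD : resultant F (derivative F) m (m - 1) ≠ 0 := fun h => by
    simpa [h] using (hsep_iff θ₀ h₀).1 hsep
  filter_upwards [MvPolynomial.ae_eval_ne_zero hD] with θ hθ hcoeff
  exact (hsep_iff θ hcoeff).2 hθ

end

/-- Let `p 0, …, p m : ℝ^d → ℝ` be polynomial functions and for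
`θ ∈ ℝ^d` set `P_θ(λ) = Σ_{u=0}^m p u (θ) * λ^u`.  If for some `θ₀` the leading
coefficient `p m (θ₀)` is nonzero and every complex root of `P_{θ₀}` is simple, then
the set of `θ` with `p m (θ) ≠ 0` for which `P_θ` has a repeated complex root has
Lebesgue measure zero. -/
theorem stmt4 (d m : ℕ) (p : ℕ → MvPolynomial (Fin d) ℝ)
    (θ₀ : Fin d → ℝ) (h₀ : eval θ₀ (p m) ≠ 0)
    (hsimple : ∀ z : ℂ,
      (∑ u ∈ range (m + 1), (eval θ₀ (p u) : ℂ) * z ^ u = 0) →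
      deriv (fun w : ℂ => ∑ u ∈ range (m + 1), (eval θ₀ (p u) : ℂ) * w ^ u) z ≠ 0) :
    volume {θ : Fin d → ℝ | eval θ (p m) ≠ 0 ∧
      ∃ z : ℂ, (∑ u ∈ range (m + 1), (eval θ (p u) : ℂ) * z ^ u = 0) ∧
        deriv (fun w : ℂ => ∑ u ∈ range (m + 1), (eval θ (p u) : ℂ) * w ^ u) z = 0}
      = 0 := by
  set F : Polynomial (MvPolynomial (Fin d) ℝ) :=
    ∑ u ∈ range (m + 1), Polynomial.C (p u) * Polynomial.X ^ u
  have hF : F.natDegree ≤ m := Polynomial.natDegree_sum_le_of_forall_le _ _ fun u hu =>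
    (Polynomial.natDegree_C_mul_X_pow_le _ _).trans (Nat.lt_succ_iff.1 (mem_range.1 hu))
  have heval : ∀ (θ : Fin d → ℝ) (z : ℂ), ∑ u ∈ range (m + 1), (eval θ (p u) : ℂ) * z ^ u
      = (F.map (complexEval θ)).eval z := by
    intro θ z
    simp [F, Polynomial.map_sum, Polynomial.eval_finsetSum, complexEval]
  simp only [heval, Polynomial.deriv] at hsimple ⊢
  have hlead : ∀ θ, eval θ (p m) ≠ 0 → (F.map (complexEval θ)).coeff m ≠ 0 := fun θ h => by
    simpa [F, Polynomial.map_sum, complexEval] using h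
  have hsep₀ := Polynomial.separable_iff_forall_isRoot_derivative.2 hsimple
  refine measure_mono_null ?_ (ae_iff.1 (ae_separable_map_complexEval hF (hlead θ₀ h₀) hsep₀))
  rintro θ ⟨hθ, z, hz, hz'⟩ hsep
  exact Polynomial.separable_iff_forall_isRoot_derivative.1 (hsep (hlead θ hθ)) z hz hz'
end

section
/- Fix p ≥ 2. For Lebesgue-almost every pair (A, B) of real p×p matrices, for every λ ∈ ℝ with det(A − λ(A − B)) = 0, all the leading principal minors of orders 1, 2, …, p − 1 of the matrix M = A − λ(A − B) are nonzero (equivalently, Gaussian elimination on M can be carried out through the first p − 1 pivots without any row or column permutation). -/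
/-!
If `λ` is a common root of `f(λ) = det (A - λ (A - B))`, of degree at most `p`, and of the
leading minor `g(λ)` of order `v`, of degree at most `v`, then the resultant `Res_{p,v}(f, g)`
vanishes. This resultant is a polynomial in the entries of `A` and `B`, and it is not the zero
polynomial: for the cyclic shift `P` and `B = P + 1` the minor is `λ ^ v`, so the resultant is
`± (det P) ^ v`. The zero set of a nonzero real polynomial is Lebesgue-null (induction on the
number of variables and Fubini), and there are only countably many `v`.
-/

open MeasureTheory Matrix Polynomial

open Set in
theorem MeasureTheory.volume_measurePreserving_uncurry (ι κ α : Type*)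
    [Fintype ι] [Fintype κ] [MeasureSpace α] [SigmaFinite (volume : Measure α)] :
    MeasurePreserving (Function.uncurry : (ι → κ → α) → ι × κ → α)
      volume volume := by
  refine ⟨measurable_uncurry, (Measure.pi_eq fun s hs => ?_).symm⟩
  have hbox : Function.uncurry ⁻¹' univ.pi s = univ.pi fun i => univ.pi fun j => s (i, j) := by
    ext f; simp [Prod.forall]
  rw [Measure.map_apply measurable_uncurry (.univ_pi hs), hbox, volume_pi_pi,
    Fintype.prod_prod_type]
  simp_rw [volume_pi_pi]

namespace Polynomial

theorem ae_eval_ne_zero_s8 {R : Type*} [CommRing R] [IsDomain R] [MeasurableSpace R]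
    {μ : Measure R} [NullSingletonClass μ] {p : R[X]} (hp : p ≠ 0) :
    ∀ᵐ t ∂μ, p.eval t ≠ 0 :=
  measure_mono_null (fun _ ht => not_not.mp ht) ((finite_setOfPred_isRoot hp).measure_zero μ)

theorem resultant_eq_zero_of_eval_eq_zero {R : Type*} [CommRing R] {f g : R[X]} {m n : ℕ}
    (hf : f.natDegree ≤ m) (hg : g.natDegree ≤ n) (hmn : m ≠ 0 ∨ n ≠ 0) {t : R}
    (hft : f.eval t = 0) (hgt : g.eval t = 0) : resultant f g m n = 0 := by
  obtain ⟨a, b, -, -, h⟩ := exists_mul_add_mul_eq_C_resultant f g hf hg hmn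
  simpa [hft, hgt] using (congrArg (eval t) h).symm

end Polynomial

namespace MvPolynomial

theorem ae_eval_ne_zero_fin : ∀ {n : ℕ} {P : MvPolynomial (Fin n) ℝ}, P ≠ 0 →
    ∀ᵐ x : Fin n → ℝ, eval x P ≠ 0
  | 0, P, hP => by
    obtain ⟨c, rfl⟩ := C_surjective (Fin 0) P
    exact .of_forall fun x => by simpa using hP
  | n + 1, P, hP => by
    set Q := finSuccEquiv ℝ n P
    have hQ : Q ≠ 0 := by simpa [Q] using hP
    have hslice : ∀ᵐ y : Fin n → ℝ, ∀ᵐ t : ℝ, eval (Fin.cons t y) P ≠ 0 := by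
      filter_upwards [ae_eval_ne_zero_fin (leadingCoeff_ne_zero.mpr hQ)] with y hy
      have hQy : Q.map (eval y) ≠ 0 := fun h => hy (by
        simpa [coeff_map] using congrArg (Polynomial.coeff · Q.natDegree) h)
      filter_upwards [Polynomial.ae_eval_ne_zero_s8 hQy] with t ht
      rwa [eval_eq_eval_mv_eval']
    have hmeas : MeasurableSet {yt : (Fin n → ℝ) × ℝ | eval (Fin.cons yt.2 yt.1) P ≠ 0} :=
      (isOpen_ne_fun ((continuous_eval P).comp (by fun_prop)) continuous_const).measurableSet
    have hprod := (Measure.ae_prod_iff_ae_ae (measurable_swap hmeas)).mpr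
      ((Measure.ae_ae_comm hmeas).mp hslice)
    filter_upwards [(volume_preserving_piFinSuccAbove (fun _ => ℝ) 0).quasiMeasurePreserving.ae
      hprod] with x hx
    simpa [Fin.cons_self_tail] using hx

theorem ae_eval_ne_zero_s8 {σ : Type*} [Fintype σ] {P : MvPolynomial σ ℝ} (hP : P ≠ 0) :
    ∀ᵐ x : σ → ℝ, eval x P ≠ 0 := by
  let e := Fintype.equivFin σ
  have hP' : rename e P ≠ 0 := (map_ne_zero_iff _ (rename_injective e e.injective)).mpr hP
  filter_upwards [(volume_preserving_arrowCongr' e (.refl ℝ) (.id _)).quasiMeasurePreserving.ae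
    (ae_eval_ne_zero_fin hP')] with x hx
  simpa [eval_rename, Function.comp_def, MeasurableEquiv.arrowCongr', Equiv.arrowCongr',
    Equiv.arrowCongr] using hx

end MvPolynomial

namespace Matrix

variable {l m n R S : Type*} [CommRing R] [CommRing S]

noncomputable def pencil (A B : Matrix m n R) : Matrix m n R[X] :=
  A.map C - (X : R[X]) • (A - B).map C

theorem pencil_map_eval (A B : Matrix m n R) (t : R) :
    (pencil A B).map (eval t) = A - t • (A - B) := by
  ext i j; simp [pencil]

theorem pencil_map_mapRingHom (A B : Matrix m n R) (φ : R →+* S) :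
    (pencil A B).map (mapRingHom φ) = pencil (A.map φ) (B.map φ) := by
  ext i j; simp [pencil]

theorem submatrix_pencil (A B : Matrix m n R) (e : l → m) (f : l → n) :
    (pencil A B).submatrix e f = pencil (A.submatrix e f) (B.submatrix e f) :=
  rfl

variable [Fintype m] [DecidableEq m] [Fintype n] [DecidableEq n]

theorem eval_det_pencil (A B : Matrix n n R) (t : R) :
    (pencil A B).det.eval t = (A - t • (A - B)).det := by
  rw [← coe_evalRingHom, RingHom.map_det, RingHom.mapMatrix_apply, coe_evalRingHom,
    pencil_map_eval]

theorem natDegree_det_pencil_le (A B : Matrix n n R) :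
    (pencil A B).det.natDegree ≤ Fintype.card n := by
  have : pencil A B = (X : R[X]) • (B - A).map C + A.map C := by
    ext i j : 1
    simp only [pencil, sub_apply, map_apply, smul_apply, map_sub, smul_eq_mul, add_apply]
    ring
  rw [this]
  exact natDegree_det_X_add_C_le _ _

/-- Taken with the formal degrees `card n` and `card m` rather than the actual ones, so that it
commutes with specialising the entries (`map_pencilResultant`). -/
noncomputable def pencilResultant (A B : Matrix n n R) (e : m → n) : R :=
  resultant (pencil A B).det ((pencil A B).submatrix e e).det (Fintype.card n) (Fintype.card m)

theorem map_pencilResultant (A B : Matrix n n R) (e : m → n) (φ : R →+* S) :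
    φ (pencilResultant A B e) = pencilResultant (A.map φ) (B.map φ) e := by
  rw [pencilResultant, ← resultant_map_map, ← coe_mapRingHom, RingHom.map_det, RingHom.map_det,
    RingHom.mapMatrix_apply, RingHom.mapMatrix_apply, ← submatrix_map, pencil_map_mapRingHom,
    pencilResultant]

theorem pencilResultant_eq_zero_of_det_eq_zero [Nonempty n] {A B : Matrix n n R} (e : m → n)
    {t : R} (h : (A - t • (A - B)).det = 0) (he : ((A - t • (A - B)).submatrix e e).det = 0) :
    pencilResultant A B e = 0 := by
  refine resultant_eq_zero_of_eval_eq_zero (natDegree_det_pencil_le _ _)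
    (natDegree_det_pencil_le _ _) (.inl Fintype.card_ne_zero) (t := t) ?_ ?_
  · rwa [eval_det_pencil]
  · rwa [submatrix_pencil, eval_det_pencil]

theorem permMatrix_finRotate_castLE_apply {p v : ℕ} (hv : v < p) (i j : Fin v) :
    (finRotate p).permMatrix R (Fin.castLE hv.le i) (Fin.castLE hv.le j) =
      if (j : ℕ) = i + 1 then 1 else 0 := by
  have : NeZero p := ⟨by omega⟩
  have : ((Fin.castLE hv.le i + 1 : Fin p) : ℕ) = i + 1 :=
    Fin.val_add_one_of_lt' (by simp; omega)
  simp [PEquiv.toMatrix_apply, Fin.ext_iff, this, eq_comm]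

theorem det_submatrix_pencil_finRotate {p v : ℕ} (hv : v < p) :
    ((pencil ((finRotate p).permMatrix R) ((finRotate p).permMatrix R + 1)).submatrix
      (Fin.castLE hv.le) (Fin.castLE hv.le)).det = (X : R[X]) ^ v := by
  have hentry : ∀ i j : Fin v, pencil ((finRotate p).permMatrix R)
      ((finRotate p).permMatrix R + 1) (Fin.castLE hv.le i) (Fin.castLE hv.le j)
      = (if (j : ℕ) = i + 1 then 1 else 0) + if i = j then X else 0 := by
    intro i j
    rw [pencil, sub_apply, map_apply, smul_apply, map_apply, sub_add_cancel_left,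
      permMatrix_finRotate_castLE_apply hv, neg_apply, one_apply]
    split_ifs <;> simp_all
  rw [det_of_isUpperTriangular]
  · simp [hentry]
  · intro i j hji
    simp only [id_eq] at hji
    simp [submatrix_apply, hentry, hji.ne', show (j : ℕ) ≠ i + 1 by omega]

theorem pencilResultant_finRotate_ne_zero [Nontrivial R] {p v : ℕ} (hv : v < p) :
    pencilResultant ((finRotate p).permMatrix R) ((finRotate p).permMatrix R + 1)
      (Fin.castLE hv.le) ≠ 0 := by
  rw [pencilResultant, det_submatrix_pencil_finRotate hv, Fintype.card_fin, Fintype.card_fin,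
    resultant_X_pow_right _ _ _ ((natDegree_det_pencil_le _ _).trans_eq (Fintype.card_fin p)),
    coeff_zero_eq_eval_zero, eval_det_pencil, zero_smul, sub_zero, det_permutation]
  exact ((isUnit_neg_one.pow _).mul
    (((Equiv.Perm.sign _).isUnit.map (Int.castRingHom R)).pow _)).ne_zero

variable (R) in
noncomputable def genericPencilResultant (e : m → n) :
    MvPolynomial (n × n ⊕ n × n) R :=
  pencilResultant (of fun i j => MvPolynomial.X (.inl (i, j)))
    (of fun i j => MvPolynomial.X (.inr (i, j))) e

theorem eval_genericPencilResultant (e : m → n) (A B : n → n → R) :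
    MvPolynomial.eval (Sum.elim (Function.uncurry A) (Function.uncurry B))
      (genericPencilResultant R e) = pencilResultant (of A) (of B) e := by
  rw [genericPencilResultant, map_pencilResultant]
  congr <;> ext <;> simp

theorem ae_pencilResultant_ne_zero (e : m → n) {A₀ B₀ : Matrix n n ℝ}
    (h : pencilResultant A₀ B₀ e ≠ 0) :
    ∀ᵐ AB : (n → n → ℝ) × (n → n → ℝ),
      pencilResultant (of AB.1) (of AB.2) e ≠ 0 := by
  have hP : genericPencilResultant ℝ e ≠ 0 := fun h0 => h <| by
    have := eval_genericPencilResultant e A₀ B₀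
    rwa [h0, map_zero, eq_comm] at this
  have hmp : MeasurePreserving (fun AB : (n → n → ℝ) × (n → n → ℝ) =>
      Sum.elim (Function.uncurry AB.1) (Function.uncurry AB.2)) volume volume :=
    (volume_measurePreserving_sumPiEquivProdPi_symm fun _ : n × n ⊕ n × n => ℝ).comp
      ((volume_measurePreserving_uncurry n n ℝ).prod (volume_measurePreserving_uncurry n n ℝ))
  filter_upwards [hmp.quasiMeasurePreserving.ae (MvPolynomial.ae_eval_ne_zero_s8 hP)] with AB hAB
  rwa [eval_genericPencilResultant] at hAB

end Matrix

theorem stmt8_general (p : ℕ) :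
    ∀ᵐ AB : (Fin p → Fin p → ℝ) × (Fin p → Fin p → ℝ),
      ∀ l : ℝ, det (of AB.1 - l • (of AB.1 - of AB.2)) = 0 →
        ∀ v : ℕ, 1 ≤ v → ∀ hv : v ≤ p - 1,
          det ((of AB.1 - l • (of AB.1 - of AB.2)).submatrix
            (Fin.castLE (hv.trans (Nat.sub_le p 1)))
            (Fin.castLE (hv.trans (Nat.sub_le p 1)))) ≠ 0 := by
  have hgeneric : ∀ v : ℕ, ∀ᵐ AB : (Fin p → Fin p → ℝ) × (Fin p → Fin p → ℝ),
      ∀ hv : v < p, pencilResultant (of AB.1) (of AB.2) (Fin.castLE hv.le) ≠ 0 := by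
    intro v
    by_cases hv : v < p
    · filter_upwards [ae_pencilResultant_ne_zero _ (pencilResultant_finRotate_ne_zero hv)]
        with AB h _ using h
    · exact .of_forall fun _ h => absurd h hv
  filter_upwards [ae_all_iff.mpr hgeneric] with AB hAB l hdet v hv1 hv hminor
  have hvp : v < p := by omega
  have : Nonempty (Fin p) := ⟨⟨0, by omega⟩⟩
  exact hAB v hvp (pencilResultant_eq_zero_of_det_eq_zero _ hdet hminor)

/-- Fix `p ≥ 2`.  For Lebesgue-almost every pair `(A, B)` of real
`p × p` matrices, for every `λ ∈ ℝ` with `det (A − λ(A − B)) = 0`, all the leading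
principal minors of orders `1, …, p − 1` of the matrix `M = A − λ(A − B)` are
nonzero. -/
theorem stmt8 (p : ℕ) (hp : 2 ≤ p) :
    ∀ᵐ AB : (Fin p → Fin p → ℝ) × (Fin p → Fin p → ℝ),
      ∀ l : ℝ, det (of AB.1 - l • (of AB.1 - of AB.2)) = 0 →
        ∀ v : ℕ, 1 ≤ v → ∀ hv : v ≤ p - 1,
          det ((of AB.1 - l • (of AB.1 - of AB.2)).submatrix
            (Fin.castLE (hv.trans (Nat.sub_le p 1)))
            (Fin.castLE (hv.trans (Nat.sub_le p 1)))) ≠ 0 :=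
  stmt8_general p
end

section
/- For 1 ≤ i ≤ k let G_i be symmetric positive definite real p×p matrices, z_i ∈ ℝ^p, c_i ∈ ℝ, and define the quadratic functions q_i(β) = βᵀG_iβ − 2⟨z_i, β⟩ + c_i and f(β) = max_i q_i(β); let β* denote the unique global minimizer of f. Suppose for each n and each i we are given G_i(n) symmetric positive definite with G_i(n) → G_i entrywise, z_i(n) → z_i, c_i(n) → c_i, and define f_n(β) = max_i (βᵀG_i(n)β − 2⟨z_i(n), β⟩ + c_i(n)). Then each f_n attains a global minimum, and any sequence β_n of global minimizers of f_n converges to β* as n → ∞. -/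
/-!
Every `f_n` is a maximum of positive definite quadratics, hence strictly convex and coercive, and
so has a minimizer. For the convergence fix `ε > 0`. As `β*` is the unique minimizer, `f > f β*`
on the sphere of radius `ε` about `β*`; since the sphere is compact and `f_n β` depends jointly
continuously on the coefficients and on `β`, also `f_n > f_n β*` on that sphere for large `n`.
A convex function exceeding its central value everywhere on a sphere exceeds it everywhere outside
the sphere too, so the minimizers of `f_n` lie in the ball of radius `ε`.
-/

open Finset Filter Matrix Topology

section Convex

variable {E : Type*} [NormedAddCommGroup E] [NormedSpace ℝ E]

lemma ConvexOn.dist_lt_of_le_of_forall_sphere {f : E → ℝ} (hf : ConvexOn ℝ Set.univ f)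
    {b x : E} {r : ℝ} (hr : 0 < r) (hsphere : ∀ y ∈ Metric.sphere b r, f b < f y)
    (hx : f x ≤ f b) : dist x b < r := by
  by_contra! hrx
  have hd : 0 < dist x b := hr.trans_le hrx
  set t := r / dist x b
  have ht : t ≤ 1 := (div_le_one hd).2 hrx
  set m := (1 - t) • b + t • x
  have hm : m ∈ Metric.sphere b r := by
    have : m - b = t • (x - b) := by simp only [m, sub_smul, one_smul, smul_sub]; abel
    rw [mem_sphere_iff_norm, this, norm_smul, ← dist_eq_norm, Real.norm_of_nonneg (by positivity),
      div_mul_cancel₀ _ hd.ne']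
  have hbm := hsphere m hm
  have hmx : f m ≤ f x := hf.le_right_of_left_le' trivial trivial (by linarith)
    (by positivity) (by ring) hbm.le
  linarith

theorem tendsto_of_forall_le_of_convexOn {X ι : Type*} [TopologicalSpace X] [ProperSpace E]
    {F : X → E → ℝ} (hF : Continuous (Function.uncurry F)) {x₀ : X} {b : E}
    (hb : ∀ y ≠ b, F x₀ b < F x₀ y) {l : Filter ι} {x : ι → X} (hx : Tendsto x l (𝓝 x₀))
    (hconv : ∀ᶠ i in l, ConvexOn ℝ Set.univ (F (x i))) {β : ι → E}
    (hβ : ∀ᶠ i in l, ∀ y, F (x i) (β i) ≤ F (x i) y) : Tendsto β l (𝓝 b) := by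
  rw [Metric.tendsto_nhds]
  intro ε hε
  have hsphere : ∀ᶠ θ in 𝓝 x₀, ∀ y ∈ Metric.sphere b ε, F θ b < F θ y := by
    refine (isCompact_sphere b ε).eventually_forall_of_forall_eventually fun y hy => ?_
    have hcenter : Continuous fun q : X × E => F q.1 b :=
      hF.comp (continuous_fst.prodMk continuous_const)
    exact hcenter.continuousAt.eventually_lt hF.continuousAt
      (hb y (Metric.ne_of_mem_sphere hy hε.ne'))
  filter_upwards [hx.eventually hsphere, hconv, hβ] with i hS hc hmin
  exact hc.dist_lt_of_le_of_forall_sphere hε hS (hmin b)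

end Convex

section StrictConvex

variable {𝕜 E β : Type*} [AddCommMonoid E] [AddCommMonoid β] [LinearOrder β]
  [IsOrderedAddMonoid β] {s : Set E}

lemma StrictConvexOn.lt_of_isMinOn [Field 𝕜] [LinearOrder 𝕜] [IsStrictOrderedRing 𝕜]
    [SMul 𝕜 E] [Module 𝕜 β] [PosSMulMono 𝕜 β] {f : E → β} (hf : StrictConvexOn 𝕜 s f)
    {b y : E} (hb : IsMinOn f s b) (hbs : b ∈ s) (hys : y ∈ s) (hy : y ≠ b) : f b < f y := by
  by_contra! hyb
  exact hy (hf.eq_of_isMinOn (fun x hx => hyb.trans (hb hx)) hb hys hbs)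

lemma StrictConvexOn.finset_sup' [Semiring 𝕜] [PartialOrder 𝕜] [SMul 𝕜 E] [Module 𝕜 β]
    [PosSMulStrictMono 𝕜 β] {ι : Type*} {t : Finset ι} (ht : t.Nonempty) {f : ι → E → β}
    (hf : ∀ i ∈ t, StrictConvexOn 𝕜 s (f i)) :
    StrictConvexOn 𝕜 s fun x => t.sup' ht fun i => f i x := by
  convert Finset.sup'_induction ht f (fun _ hg _ hh => hg.sup hh) hf using 1
  funext x
  rw [Finset.sup'_apply]

end StrictConvex

section Quadratic

variable {n : Type*} [Fintype n]

noncomputable def quadratic (A : Matrix n n ℝ) (z : n → ℝ) (c : ℝ) (β : n → ℝ) : ℝ :=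
  β ⬝ᵥ (A *ᵥ β) - 2 * (z ⬝ᵥ β) + c

lemma quadratic_add_smul (A : Matrix n n ℝ) (z : n → ℝ) (c : ℝ) (x y : n → ℝ) {a b : ℝ}
    (hab : a + b = 1) :
    quadratic A z c (a • x + b • y) =
      a * quadratic A z c x + b * quadratic A z c y - a * b * ((x - y) ⬝ᵥ (A *ᵥ (x - y))) := by
  obtain rfl : b = 1 - a := by linarith
  simp only [quadratic, mulVec_add, mulVec_smul, mulVec_sub, add_dotProduct, dotProduct_add,
    smul_dotProduct, dotProduct_smul, sub_dotProduct, dotProduct_sub, smul_eq_mul]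
  ring

lemma strictConvexOn_quadratic {A : Matrix n n ℝ} (hA : A.PosDef) (z : n → ℝ) (c : ℝ) :
    StrictConvexOn ℝ Set.univ (quadratic A z c) := by
  refine ⟨convex_univ, fun x _ y _ hxy a b ha hb hab => ?_⟩
  have hpos : 0 < (x - y) ⬝ᵥ (A *ᵥ (x - y)) := by
    simpa using hA.dotProduct_mulVec_pos (sub_ne_zero.2 hxy)
  rw [quadratic_add_smul A z c x y hab, smul_eq_mul, smul_eq_mul]
  nlinarith [mul_pos (mul_pos ha hb) hpos]

lemma Matrix.PosDef.exists_pos_mul_norm_sq_le {A : Matrix n n ℝ} (hA : A.PosDef) :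
    ∃ μ > 0, ∀ x : n → ℝ, μ * ‖x‖ ^ 2 ≤ x ⬝ᵥ (A *ᵥ x) := by
  obtain ⟨μ, hμ, hsphere⟩ := (isCompact_sphere (0 : n → ℝ) 1).exists_forall_le'
    (f := fun u => u ⬝ᵥ (A *ᵥ u)) (by fun_prop) (a := 0) fun u hu => by
      simpa using hA.dotProduct_mulVec_pos (ne_zero_of_mem_sphere one_ne_zero ⟨u, hu⟩)
  refine ⟨μ, hμ, fun x => ?_⟩
  rcases eq_or_ne x 0 with rfl | hx
  · simp
  have hnx : 0 < ‖x‖ := norm_pos_iff.2 hx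
  have hunit := hsphere (‖x‖⁻¹ • x) (by simp [norm_smul, hnx.ne'])
  simp only [mulVec_smul, dotProduct_smul, smul_dotProduct, smul_eq_mul] at hunit
  have := mul_le_mul_of_nonneg_left hunit (sq_nonneg ‖x‖)
  field_simp at this
  linarith

lemma dotProduct_le_sum_abs_mul_norm (z x : n → ℝ) : z ⬝ᵥ x ≤ (∑ i, |z i|) * ‖x‖ := by
  rw [dotProduct, Finset.sum_mul]
  refine Finset.sum_le_sum fun i _ => (le_abs_self _).trans ?_
  rw [abs_mul]
  exact mul_le_mul_of_nonneg_left (norm_le_pi_norm x i) (abs_nonneg _)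

lemma tendsto_quadratic_cocompact {A : Matrix n n ℝ} (hA : A.PosDef) (z : n → ℝ) (c : ℝ) :
    Tendsto (quadratic A z c) (cocompact _) atTop := by
  obtain ⟨μ, hμ, hμA⟩ := hA.exists_pos_mul_norm_sq_le
  set C := ∑ i, |z i|
  have hlower (β : n → ℝ) : ‖β‖ * (μ * ‖β‖ - 2 * C) + c ≤ quadratic A z c β := by
    have := dotProduct_le_sum_abs_mul_norm z β
    unfold quadratic
    linarith [hμA β]
  have hpoly : Tendsto (fun t : ℝ => t * (μ * t - 2 * C) + c) atTop atTop :=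
    tendsto_atTop_add_const_right _ _ <| tendsto_id.atTop_mul_atTop₀ <|
      tendsto_atTop_add_const_right _ _ (tendsto_id.const_mul_atTop hμ)
  exact tendsto_atTop_mono hlower (hpoly.comp tendsto_norm_cocompact_atTop)

variable {ι : Type*} [Fintype ι] [Nonempty ι]

noncomputable def maxQuadratic (G : ι → Matrix n n ℝ) (z : ι → n → ℝ) (c : ι → ℝ)
    (β : n → ℝ) : ℝ :=
  univ.sup' univ_nonempty fun i => quadratic (G i) (z i) (c i) β

lemma continuous_uncurry_maxQuadratic :
    Continuous (Function.uncurry fun θ : (ι → Matrix n n ℝ) × (ι → n → ℝ) × (ι → ℝ) =>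
      maxQuadratic θ.1 θ.2.1 θ.2.2) :=
  Continuous.finset_sup'_apply univ_nonempty fun i _ => by unfold quadratic; fun_prop

lemma strictConvexOn_maxQuadratic {G : ι → Matrix n n ℝ} (hG : ∀ i, (G i).PosDef)
    (z : ι → n → ℝ) (c : ι → ℝ) : StrictConvexOn ℝ Set.univ (maxQuadratic G z c) :=
  StrictConvexOn.finset_sup' _ fun i _ => strictConvexOn_quadratic (hG i) (z i) (c i)

lemma exists_forall_maxQuadratic_le {G : ι → Matrix n n ℝ} (hG : ∀ i, (G i).PosDef)
    (z : ι → n → ℝ) (c : ι → ℝ) :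
    ∃ β, ∀ β', maxQuadratic G z c β ≤ maxQuadratic G z c β' := by
  obtain ⟨i₀⟩ := ‹Nonempty ι›
  have hcoercive : Tendsto (maxQuadratic G z c) (cocompact _) atTop :=
    tendsto_atTop_mono (fun β => le_sup' (fun i => quadratic (G i) (z i) (c i) β) (mem_univ i₀))
      (tendsto_quadratic_cocompact (hG i₀) (z i₀) (c i₀))
  exact (continuous_uncurry_maxQuadratic.uncurry_left (G, z, c)).exists_forall_le hcoercive

end Quadratic

/-- For `0 ≤ i ≤ k` let `G i` be symmetric positive definite real
`p × p` matrices, `z i ∈ ℝ^p`, `c i ∈ ℝ`, and define the quadratics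
`q i β = βᵀ (G i) β − 2⟨z i, β⟩ + c i` and `f = max_i q i`, with unique global
minimizer `β*`.  If `Gn n i → G i` (entrywise, each `Gn n i` symmetric positive
definite), `zn n i → z i`, `cn n i → c i`, then each
`f_n = max_i (βᵀ (Gn n i) β − 2⟨zn n i, β⟩ + cn n i)` attains a global minimum, and
any sequence of global minimizers of the `f_n` converges to `β*`. -/
theorem stmt14 (p k : ℕ)
    (G : Fin (k + 1) → Matrix (Fin p) (Fin p) ℝ)
    (z : Fin (k + 1) → Fin p → ℝ) (c : Fin (k + 1) → ℝ)
    (hG : ∀ i, (G i).PosDef)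
    (βstar : Fin p → ℝ)
    (hmin : ∀ β : Fin p → ℝ,
      (univ.sup' univ_nonempty fun i => βstar ⬝ᵥ (G i *ᵥ βstar) - 2 * (z i ⬝ᵥ βstar) + c i) ≤
        (univ.sup' univ_nonempty fun i => β ⬝ᵥ (G i *ᵥ β) - 2 * (z i ⬝ᵥ β) + c i))
    (Gn : ℕ → Fin (k + 1) → Matrix (Fin p) (Fin p) ℝ)
    (zn : ℕ → Fin (k + 1) → Fin p → ℝ) (cn : ℕ → Fin (k + 1) → ℝ)
    (hGn : ∀ n i, (Gn n i).PosDef)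
    (hGconv : ∀ i u v, Tendsto (fun n => Gn n i u v) atTop (nhds (G i u v)))
    (hzconv : ∀ i u, Tendsto (fun n => zn n i u) atTop (nhds (z i u)))
    (hcconv : ∀ i, Tendsto (fun n => cn n i) atTop (nhds (c i))) :
    (∀ n, ∃ β : Fin p → ℝ, ∀ β' : Fin p → ℝ,
      (univ.sup' univ_nonempty fun i => β ⬝ᵥ (Gn n i *ᵥ β) - 2 * (zn n i ⬝ᵥ β) + cn n i) ≤
        (univ.sup' univ_nonempty fun i => β' ⬝ᵥ (Gn n i *ᵥ β') - 2 * (zn n i ⬝ᵥ β') + cn n i)) ∧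
    ∀ βn : ℕ → Fin p → ℝ,
      (∀ n, ∀ β' : Fin p → ℝ,
        (univ.sup' univ_nonempty fun i =>
          βn n ⬝ᵥ (Gn n i *ᵥ βn n) - 2 * (zn n i ⬝ᵥ βn n) + cn n i) ≤
          (univ.sup' univ_nonempty fun i =>
            β' ⬝ᵥ (Gn n i *ᵥ β') - 2 * (zn n i ⬝ᵥ β') + cn n i)) →
      Tendsto βn atTop (nhds βstar) := by
  refine ⟨fun n => exists_forall_maxQuadratic_le (hGn n) (zn n) (cn n), fun βn hβn => ?_⟩
  have hstrict : ∀ β ≠ βstar, maxQuadratic G z c βstar < maxQuadratic G z c β :=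
    fun β => (strictConvexOn_maxQuadratic hG z c).lt_of_isMinOn (isMinOn_univ_iff.2 hmin)
      trivial trivial
  have hparams : Tendsto (fun n => (Gn n, zn n, cn n)) atTop (𝓝 (G, z, c)) :=
    (tendsto_pi_nhds.2 fun i => tendsto_pi_nhds.2 fun u => tendsto_pi_nhds.2 (hGconv i u))
      |>.prodMk_nhds ((tendsto_pi_nhds.2 fun i => tendsto_pi_nhds.2 (hzconv i)).prodMk_nhds
        (tendsto_pi_nhds.2 hcconv))
  -- The explicit arguments keep unification from unfolding `Finset.sup'`.
  exact tendsto_of_forall_le_of_convexOn (x₀ := (G, z, c))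
    (continuous_uncurry_maxQuadratic (ι := Fin (k + 1)) (n := Fin p)) hstrict hparams
    (.of_forall fun n => (strictConvexOn_maxQuadratic (hGn n) (zn n) (cn n)).convexOn)
    (.of_forall hβn)
end
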